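/- Set dr := X₁ + X₂ + X₃ and U := I_{12}^{+}P₁^{+} − (3/4) I_{12}^{+}P₃^{+} − (1/4) I_{12}^{+}P₃^{−} + (3/4) I_{12}^{−}P₃^{+} − (3/4) I_{12}^{−}P₃^{−}. Then (K+1)(dr · U) = 0, i.e. U is a nonzero solution with proper value 0 and co-value 0 of the inhomogeneous proper-value problem for the total operator (K+1)·dr. -/

import Mathlib

/-!
The `X_l` are pairwise commuting involutions (the two sign changes from anticommuting `e_l, e_m`
cancel), so `U` lives in the commutative algebra they generate, where it reduces to
`U = (dr - 2 X₁X₂X₃)/4`. Since `dr² = 3 + 2(X₁X₂ + X₁X₃ + X₂X₃)` and `dr · X₁X₂X₃` is that same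
sum of products, `dr · U = 3/4` is a scalar; `K+1` kills scalars because every `J_l` is a
commutator with `w^l`. As `A` is nontrivial, `dr · U ≠ 0` also forces `U ≠ 0`.
-/

open scoped TensorProduct

noncomputable section

/-- The standard positive-definite quadratic form on `ℝ³`. -/
abbrev Q3 : QuadraticForm ℝ (Fin 3 → ℝ) :=
  QuadraticMap.weightedSumSquares ℝ (fun _ : Fin 3 => (1 : ℝ))

/-- The Clifford algebra of 3-dimensional Euclidean space. -/
abbrev Cl3 : Type := CliffordAlgebra Q3

/-- The tensor product of two copies of `Cl3`, as ℝ-algebras. -/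
abbrev A3 : Type := Cl3 ⊗[ℝ] Cl3

/-- The generators `e₁, e₂, e₃` (indexed by `Fin 3`). -/
def e (l : Fin 3) : Cl3 := CliffordAlgebra.ι Q3 (Pi.single l 1)

/-- `X_l := e_l ⊗ e_l`. -/
def X (l : Fin 3) : A3 := e l ⊗ₜ[ℝ] e l

/-- `w^i := (e_j e_k) ⊗ 1` for `(i,j,k)` a cyclic permutation of the indices. -/
def w (i : Fin 3) : A3 := (e (i + 1) * e (i + 2)) ⊗ₜ[ℝ] (1 : Cl3)

/-- The (ℝ-linear) operators `J_l(U) := (1/2)(w^l U − U w^l)`. -/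
def J (l : Fin 3) (U : A3) : A3 := (1/2 : ℝ) • (w l * U - U * w l)

/-- Kähler's total angular momentum operator `K+1`. -/
def K1 (U : A3) : A3 := J 0 U * w 0 + J 1 U * w 1 + J 2 U * w 2

/-- The idempotents `I_{ij}^ε := (1/2)(1 + ε X_i X_j)`. -/
def Iem (i j : Fin 3) (ε : ℝ) : A3 := (1/2 : ℝ) • ((1 : A3) + ε • (X i * X j))

/-- The idempotents `P_l^δ := (1/2)(1 + δ X_l)`. -/
def P (l : Fin 3) (δ : ℝ) : A3 := (1/2 : ℝ) • ((1 : A3) + δ • X l)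
section Involutions

variable {R : Type*}

def eigenProj [Ring R] [Algebra ℝ R] (a : R) (ε : ℝ) : R := (1/2 : ℝ) • (1 + ε • a)

-- `Iem i j ε` and `P l δ` unfold to `eigenProj (X i * X j) ε` and `eigenProj (X l) δ`, so
-- `solutionU (X 0) (X 1) (X 2)` is the paper's `U`.
def solutionU [Ring R] [Algebra ℝ R] (a b c : R) : R :=
  eigenProj (a * b) 1 * eigenProj a 1
    - (3/4 : ℝ) • (eigenProj (a * b) 1 * eigenProj c 1)
    - (1/4 : ℝ) • (eigenProj (a * b) 1 * eigenProj c (-1))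
    + (3/4 : ℝ) • (eigenProj (a * b) (-1) * eigenProj c 1)
    - (3/4 : ℝ) • (eigenProj (a * b) (-1) * eigenProj c (-1))

theorem AlgHom.map_solutionU {S : Type*} [Ring R] [Algebra ℝ R] [Ring S] [Algebra ℝ S]
    (f : R →ₐ[ℝ] S) (a b c : R) : f (solutionU a b c) = solutionU (f a) (f b) (f c) := by
  simp only [solutionU, eigenProj, map_sub, map_add, map_mul, map_smul, map_one]

section CommRing

variable [CommRing R] [Algebra ℝ R] {a b c : R}

theorem solutionU_eq_of_mul_self (ha : a * a = 1) :
    solutionU a b c = (1/4 : ℝ) • (a + b + c) - (1/2 : ℝ) • (a * b * c) := by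
  unfold solutionU eigenProj
  linear_combination (norm := algebra) (1/4 : ℝ) • b * ha

theorem add_mul_solutionU_of_mul_self (ha : a * a = 1) (hb : b * b = 1) (hc : c * c = 1) :
    (a + b + c) * solutionU a b c = (3/4 : ℝ) • 1 := by
  rw [solutionU_eq_of_mul_self ha]
  linear_combination (norm := algebra) (1/4 : ℝ) • (1 - 2 * b * c) * ha
    + (1/4 : ℝ) • (1 - 2 * a * c) * hb + (1/4 : ℝ) • (1 - 2 * a * b) * hc

end CommRing

open scoped IsMulCommutative in
theorem add_mul_solutionU_of_commute [Ring R] [Algebra ℝ R] {a b c : R}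
    (hab : Commute a b) (hac : Commute a c) (hbc : Commute b c)
    (ha : a * a = 1) (hb : b * b = 1) (hc : c * c = 1) :
    (a + b + c) * solutionU a b c = (3/4 : ℝ) • 1 := by
  let S := Algebra.adjoin ℝ {a, b, c}
  have : IsMulCommutative S := Algebra.isMulCommutative_adjoin ℝ <| by
    rintro x (rfl | rfl | rfl) y (rfl | rfl | rfl)
    exacts [rfl, hab.eq, hac.eq, hab.symm.eq, rfl, hbc.eq, hac.symm.eq, hbc.symm.eq, rfl]
  let a' : S := ⟨a, Algebra.subset_adjoin (by simp)⟩
  let b' : S := ⟨b, Algebra.subset_adjoin (by simp)⟩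
  let c' : S := ⟨c, Algebra.subset_adjoin (by simp)⟩
  have key := congrArg S.val (add_mul_solutionU_of_mul_self (a := a') (b := b') (c := c')
    (Subtype.ext ha) (Subtype.ext hb) (Subtype.ext hc))
  simp only [map_mul, map_add, AlgHom.map_solutionU, map_smul, map_one] at key
  exact key

end Involutions

theorem e_mul_self (l : Fin 3) : e l * e l = 1 := by
  rw [e, CliffordAlgebra.ι_sq_scalar]
  simp [QuadraticMap.weightedSumSquares_apply, Pi.single_apply]

theorem e_mul_e_of_ne {l m : Fin 3} (h : l ≠ m) : e l * e m = -(e m * e l) := by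
  have hpolar : QuadraticMap.polar Q3 (Pi.single l 1) (Pi.single m 1) = 0 := by
    simp [QuadraticMap.polar, QuadraticMap.weightedSumSquares_apply, Pi.single_apply,
      Fin.sum_univ_three]
    fin_cases l <;> fin_cases m <;> simp_all
  have := CliffordAlgebra.ι_mul_ι_add_swap (Q := Q3) (Pi.single l 1) (Pi.single m 1)
  rw [hpolar, map_zero] at this
  exact eq_neg_of_add_eq_zero_left this

theorem X_mul_self (l : Fin 3) : X l * X l = 1 := by
  rw [X, Algebra.TensorProduct.tmul_mul_tmul, e_mul_self, Algebra.TensorProduct.one_def]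

theorem X_commute (l m : Fin 3) : Commute (X l) (X m) := by
  obtain rfl | h := eq_or_ne l m
  · exact Commute.refl _
  · simp only [Commute, SemiconjBy, X, Algebra.TensorProduct.tmul_mul_tmul, e_mul_e_of_ne h,
      TensorProduct.neg_tmul, TensorProduct.tmul_neg, neg_neg]

theorem J_eq_zero_of_commute {l : Fin 3} {U : A3} (h : Commute (w l) U) : J l U = 0 := by
  rw [J, h.eq, sub_self, smul_zero]

theorem K1_eq_zero_of_commute {U : A3} (h : ∀ l, Commute (w l) U) : K1 U = 0 := by
  simp only [K1, J_eq_zero_of_commute (h _), zero_mul, add_zero]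

/-- With `dr := X₁ + X₂ + X₃` and
`U := I₁₂⁺P₁⁺ − (3/4) I₁₂⁺P₃⁺ − (1/4) I₁₂⁺P₃⁻ + (3/4) I₁₂⁻P₃⁺ − (3/4) I₁₂⁻P₃⁻`,
`U` is a nonzero solution of `(K+1)(dr · U) = 0` (proper value `0`, co-value `0`). -/
theorem stmt16 :
    K1 ((X 0 + X 1 + X 2) *
        (Iem 0 1 1 * P 0 1
          - (3/4 : ℝ) • (Iem 0 1 1 * P 2 1)
          - (1/4 : ℝ) • (Iem 0 1 1 * P 2 (-1))
          + (3/4 : ℝ) • (Iem 0 1 (-1) * P 2 1)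
          - (3/4 : ℝ) • (Iem 0 1 (-1) * P 2 (-1)))) = 0 ∧
    (Iem 0 1 1 * P 0 1
      - (3/4 : ℝ) • (Iem 0 1 1 * P 2 1)
      - (1/4 : ℝ) • (Iem 0 1 1 * P 2 (-1))
      + (3/4 : ℝ) • (Iem 0 1 (-1) * P 2 1)
      - (3/4 : ℝ) • (Iem 0 1 (-1) * P 2 (-1))) ≠ 0 := by
  change K1 ((X 0 + X 1 + X 2) * solutionU (X 0) (X 1) (X 2)) = 0 ∧
    solutionU (X 0) (X 1) (X 2) ≠ 0
  have hdr : (X 0 + X 1 + X 2) * solutionU (X 0) (X 1) (X 2) = (3/4 : ℝ) • 1 :=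
    add_mul_solutionU_of_commute (X_commute 0 1) (X_commute 0 2) (X_commute 1 2)
      (X_mul_self 0) (X_mul_self 1) (X_mul_self 2)
  refine ⟨?_, fun hU => ?_⟩
  · rw [hdr]
    exact K1_eq_zero_of_commute fun l => (Commute.one_right _).smul_right _
  · rw [hU, mul_zero, eq_comm, smul_eq_zero] at hdr
    norm_num at hdr
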